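/- Let {A_α}_{α=1}^m and {a_α}_{α=1}^m be families in M_d(ℂ), each pairwise orthogonal with respect to the Hilbert–Schmidt inner product, and let {D_β}_{β=1}^m be a family in M_d(ℂ) that is pairwise orthogonal with respect to the Hilbert–Schmidt inner product. Let B_1, …, B_m, C_1, …, C_m ∈ M_d(ℂ) be arbitrary. On ℂ^d ⊗ ℂ^d ⊗ ℂ^d define Q̃ = Σ_α A_α ⊗ B_α ⊗ I_d, Q̂̃ = Σ_α a_α ⊗ B_α ⊗ I_d, and P̃ = Σ_β I_d ⊗ C_β ⊗ D_β. Then ‖[Q̃, P̃]‖_F² = Σ_{α,β} ‖A_α‖_F² · ‖[B_α, C_β]‖_F² · ‖D_β‖_F², and consequently, if ‖a_α‖_F = ‖A_α‖_F for every α, then ‖[Q̂̃, P̃]‖_F = ‖[Q̃, P̃]‖_F. -/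

import Mathlib

open Matrix
open scoped Kronecker

noncomputable def hsInner {n : Type*} [Fintype n] (A B : Matrix n n ℂ) : ℂ :=
  Matrix.trace (Aᴴ * B)

noncomputable def frob {n : Type*} [Fintype n] (A : Matrix n n ℂ) : ℝ :=
  Real.sqrt (Matrix.trace (Aᴴ * A)).re

/-!
Since `I ⊗ C ⊗ D` commutes with `A ⊗ B ⊗ I` in the outer factors, the commutator `[Q̃, P̃]` is
`Σ_{α,β} A_α ⊗ [B_α, C_β] ⊗ D_β`. The Hilbert–Schmidt inner product is multiplicative on
Kronecker products, so orthogonality of `{A_α}` and of `{D_β}` makes these terms pairwise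
orthogonal, and Pythagoras gives the formula for `‖[Q̃, P̃]‖_F²`. It depends on the `A_α` only
through their norms, so replacing them by the `a_α` leaves it unchanged.
-/

namespace Matrix

variable {R l m n p : Type*} [Ring R]

theorem kronecker_sub (A : Matrix l m R) (B B' : Matrix n p R) :
    A ⊗ₖ (B - B') = A ⊗ₖ B - A ⊗ₖ B' := by
  ext; simp [mul_sub]

theorem sub_kronecker (A A' : Matrix l m R) (B : Matrix n p R) :
    (A - A') ⊗ₖ B = A ⊗ₖ B - A' ⊗ₖ B := by
  ext; simp [sub_mul]

end Matrix

section Commutator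

variable {R ι κ l n p : Type*} [CommRing R] [Fintype ι] [Fintype κ]
  [Fintype l] [Fintype n] [Fintype p] [DecidableEq l] [DecidableEq p]

theorem commutator_kronecker (A : Matrix l l R) (B C : Matrix n n R) (D : Matrix p p R) :
    ((A ⊗ₖ B) ⊗ₖ (1 : Matrix p p R)) * (((1 : Matrix l l R) ⊗ₖ C) ⊗ₖ D) -
        (((1 : Matrix l l R) ⊗ₖ C) ⊗ₖ D) * ((A ⊗ₖ B) ⊗ₖ (1 : Matrix p p R)) =
      (A ⊗ₖ (B * C - C * B)) ⊗ₖ D := by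
  simp only [← mul_kronecker_mul, Matrix.mul_one, Matrix.one_mul, kronecker_sub, sub_kronecker]

theorem commutator_sum_kronecker (A : ι → Matrix l l R) (B : ι → Matrix n n R)
    (C : κ → Matrix n n R) (D : κ → Matrix p p R) :
    (∑ i, (A i ⊗ₖ B i) ⊗ₖ (1 : Matrix p p R)) * (∑ j, ((1 : Matrix l l R) ⊗ₖ C j) ⊗ₖ D j) -
        (∑ j, ((1 : Matrix l l R) ⊗ₖ C j) ⊗ₖ D j) * (∑ i, (A i ⊗ₖ B i) ⊗ₖ (1 : Matrix p p R)) =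
      ∑ i, ∑ j, (A i ⊗ₖ (B i * C j - C j * B i)) ⊗ₖ D j := by
  rw [Finset.sum_mul_sum, Finset.sum_mul_sum, Finset.sum_comm (s := Finset.univ (α := κ)),
    ← Finset.sum_sub_distrib]
  simp only [← Finset.sum_sub_distrib, commutator_kronecker]

end Commutator

section HilbertSchmidt

open ComplexOrder

variable {n p : Type*} [Fintype n] [Fintype p]

theorem frob_nonneg (A : Matrix n n ℂ) : 0 ≤ frob A :=
  Real.sqrt_nonneg _

theorem hsInner_self_eq_frob_sq (A : Matrix n n ℂ) : hsInner A A = ((frob A ^ 2 : ℝ) : ℂ) := by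
  obtain ⟨hre, him⟩ := Complex.nonneg_iff.mp (posSemidef_conjTranspose_mul_self A).trace_nonneg
  rw [frob, Real.sq_sqrt hre]
  exact Complex.ext rfl (by simp [hsInner, ← him])

theorem hsInner_kronecker (A A' : Matrix n n ℂ) (B B' : Matrix p p ℂ) :
    hsInner (A ⊗ₖ B) (A' ⊗ₖ B') = hsInner A A' * hsInner B B' := by
  rw [hsInner, conjTranspose_kronecker, ← mul_kronecker_mul, trace_kronecker, hsInner, hsInner]

theorem frob_kronecker (A : Matrix n n ℂ) (B : Matrix p p ℂ) :
    frob (A ⊗ₖ B) = frob A * frob B := by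
  refine (pow_left_inj₀ (frob_nonneg _) (by positivity [frob_nonneg A, frob_nonneg B])
    two_ne_zero).mp (Complex.ofReal_injective ?_)
  rw [← hsInner_self_eq_frob_sq, hsInner_kronecker, hsInner_self_eq_frob_sq,
    hsInner_self_eq_frob_sq]
  push_cast
  ring

theorem hsInner_sum_sum {ι κ : Type*} (s : Finset ι) (t : Finset κ)
    (f : ι → Matrix n n ℂ) (g : κ → Matrix n n ℂ) :
    hsInner (∑ i ∈ s, f i) (∑ j ∈ t, g j) = ∑ i ∈ s, ∑ j ∈ t, hsInner (f i) (g j) := by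
  simp only [hsInner, conjTranspose_sum, Finset.sum_mul_sum, trace_sum]

theorem frob_sum_sq_of_pairwise {ι : Type*} [Fintype ι] (F : ι → Matrix n n ℂ)
    (hF : Pairwise fun i j => hsInner (F i) (F j) = 0) :
    frob (∑ i, F i) ^ 2 = ∑ i, frob (F i) ^ 2 := by
  apply Complex.ofReal_injective
  rw [← hsInner_self_eq_frob_sq, hsInner_sum_sum, Complex.ofReal_sum]
  refine Finset.sum_congr rfl fun i _ => ?_
  rw [Fintype.sum_eq_single i fun j hji => hF hji.symm, hsInner_self_eq_frob_sq]

end HilbertSchmidt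

theorem frob_sq_commutator_sum_kronecker {ι κ l n p : Type*} [Fintype ι] [Fintype κ]
    [Fintype l] [Fintype n] [Fintype p] [DecidableEq l] [DecidableEq p]
    (A : ι → Matrix l l ℂ) (B : ι → Matrix n n ℂ) (C : κ → Matrix n n ℂ) (D : κ → Matrix p p ℂ)
    (hA : Pairwise fun i j => hsInner (A i) (A j) = 0)
    (hD : Pairwise fun i j => hsInner (D i) (D j) = 0) :
    frob ((∑ i, (A i ⊗ₖ B i) ⊗ₖ (1 : Matrix p p ℂ)) *
          (∑ j, ((1 : Matrix l l ℂ) ⊗ₖ C j) ⊗ₖ D j) -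
        (∑ j, ((1 : Matrix l l ℂ) ⊗ₖ C j) ⊗ₖ D j) *
          (∑ i, (A i ⊗ₖ B i) ⊗ₖ (1 : Matrix p p ℂ))) ^ 2 =
      ∑ i, ∑ j, frob (A i) ^ 2 * frob (B i * C j - C j * B i) ^ 2 * frob (D j) ^ 2 := by
  set F : ι × κ → Matrix ((l × n) × p) ((l × n) × p) ℂ :=
    fun ij => (A ij.1 ⊗ₖ (B ij.1 * C ij.2 - C ij.2 * B ij.1)) ⊗ₖ D ij.2
  have hF : Pairwise fun x y => hsInner (F x) (F y) = 0 := by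
    rintro ⟨i, j⟩ ⟨i', j'⟩ hne
    simp only [F, hsInner_kronecker]
    by_cases hi : i = i'
    · rw [hD fun hj => hne (Prod.ext hi hj), mul_zero]
    · rw [hA hi, zero_mul, zero_mul]
  rw [commutator_sum_kronecker, ← Fintype.sum_prod_type', frob_sum_sq_of_pairwise F hF,
    Fintype.sum_prod_type]
  simp only [F, frob_kronecker, mul_pow]

/-- For `Q̃ = Σ_α A_α ⊗ B_α ⊗ I`, `Q̂̃ = Σ_α a_α ⊗ B_α ⊗ I` and
`P̃ = Σ_β I ⊗ C_β ⊗ D_β`, with `{A_α}`, `{a_α}` and `{D_β}` pairwise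
orthogonal families, one has
`‖[Q̃,P̃]‖_F² = Σ_{α,β} ‖A_α‖_F² ‖[B_α,C_β]‖_F² ‖D_β‖_F²`;
consequently, if `‖a_α‖_F = ‖A_α‖_F` for all `α`, then
`‖[Q̂̃,P̃]‖_F = ‖[Q̃,P̃]‖_F`. -/
theorem commutator_frob_unchanged_by_norm_preserving_replacement (d m : ℕ)
    (A a B C Dm : Fin m → Matrix (Fin d) (Fin d) ℂ)
    (hAo : ∀ α β, α ≠ β → hsInner (A α) (A β) = 0)
    (hao : ∀ α β, α ≠ β → hsInner (a α) (a β) = 0)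
    (hDo : ∀ α β, α ≠ β → hsInner (Dm α) (Dm β) = 0) :
    (frob ((∑ α, (A α ⊗ₖ B α) ⊗ₖ (1 : Matrix (Fin d) (Fin d) ℂ)) *
            (∑ β, ((1 : Matrix (Fin d) (Fin d) ℂ) ⊗ₖ C β) ⊗ₖ Dm β) -
           (∑ β, ((1 : Matrix (Fin d) (Fin d) ℂ) ⊗ₖ C β) ⊗ₖ Dm β) *
            (∑ α, (A α ⊗ₖ B α) ⊗ₖ (1 : Matrix (Fin d) (Fin d) ℂ)))) ^ 2 =
      (∑ α, ∑ β, (frob (A α)) ^ 2 * (frob (B α * C β - C β * B α)) ^ 2 *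
        (frob (Dm β)) ^ 2) ∧
    ((∀ α, frob (a α) = frob (A α)) →
      frob ((∑ α, (a α ⊗ₖ B α) ⊗ₖ (1 : Matrix (Fin d) (Fin d) ℂ)) *
             (∑ β, ((1 : Matrix (Fin d) (Fin d) ℂ) ⊗ₖ C β) ⊗ₖ Dm β) -
            (∑ β, ((1 : Matrix (Fin d) (Fin d) ℂ) ⊗ₖ C β) ⊗ₖ Dm β) *
             (∑ α, (a α ⊗ₖ B α) ⊗ₖ (1 : Matrix (Fin d) (Fin d) ℂ))) =
      frob ((∑ α, (A α ⊗ₖ B α) ⊗ₖ (1 : Matrix (Fin d) (Fin d) ℂ)) *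
             (∑ β, ((1 : Matrix (Fin d) (Fin d) ℂ) ⊗ₖ C β) ⊗ₖ Dm β) -
            (∑ β, ((1 : Matrix (Fin d) (Fin d) ℂ) ⊗ₖ C β) ⊗ₖ Dm β) *
             (∑ α, (A α ⊗ₖ B α) ⊗ₖ (1 : Matrix (Fin d) (Fin d) ℂ)))) := by
  have hD : Pairwise fun i j => hsInner (Dm i) (Dm j) = 0 := fun i j => hDo i j
  refine ⟨frob_sq_commutator_sum_kronecker A B C Dm (fun i j => hAo i j) hD, fun hnorm => ?_⟩
  refine (pow_left_inj₀ (frob_nonneg _) (frob_nonneg _) two_ne_zero).mp ?_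
  rw [frob_sq_commutator_sum_kronecker a B C Dm (fun i j => hao i j) hD,
    frob_sq_commutator_sum_kronecker A B C Dm (fun i j => hAo i j) hD]
  simp only [hnorm]
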